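/- arXiv:0804.0701 — 4 statements merged into one kernel-verified Lean document; each statement's English description precedes it below -/
import Mathlib

section
/- Let f : U → ℝⁿ⁺¹ be a smooth map on an open set U ⊆ ℝⁿ with a smooth map ν : U → ℝⁿ⁺¹ \ {0} satisfying ⟨df(v), ν⟩ = 0 for all tangent vectors v, and let λ := det(f_{x_1}, ..., f_{x_n}, ν). If p ∈ U satisfies λ(p) = 0 and dλ_p ≠ 0 (i.e., p is a 1-nondegenerate singular point), then the kernel of the linear map df_p : ℝⁿ → ℝⁿ⁺¹ has dimension exactly one. -/
open Finset Matrix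

lemma fderiv_det_apply {m : ℕ} {E : Type*} [NormedAddCommGroup E] [NormedSpace ℝ E]
    (a : Fin m → Fin m → E → ℝ) (D : Fin m → Fin m → E →L[ℝ] ℝ) (x : E)
    (hD : ∀ i j, HasFDerivAt (a i j) (D i j) x) (h : E) :
    fderiv ℝ (fun q => (Matrix.of fun i j => a i j q).det) x h
      = ∑ j, ((Matrix.of fun i j' => a i j' x).updateCol j (fun i => D i j h)).det := by
  classical
  have H : HasFDerivAt (fun q => (Matrix.of fun i j => a i j q).det)
      (∑ σ : Equiv.Perm (Fin m), ((Equiv.Perm.sign σ : ℤ) : ℝ) •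
        (∑ i, (∏ j ∈ Finset.univ.erase i, a (σ j) j x) • D (σ i) i)) x := by
    have : (fun q => (Matrix.of fun i j => a i j q).det)
        = fun q => ∑ σ : Equiv.Perm (Fin m), ((Equiv.Perm.sign σ : ℤ) : ℝ) *
            ∏ i, a (σ i) i q := by
      funext q
      rw [Matrix.det_apply']
      rfl
    rw [this]
    apply HasFDerivAt.fun_sum
    intro σ _
    exact (HasFDerivAt.finset_prod (fun i _ => hD (σ i) i)).const_mul _
  rw [H.fderiv]
  simp only [ContinuousLinearMap.sum_apply, ContinuousLinearMap.smul_apply, smul_eq_mul,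
    Finset.mul_sum]
  rw [Finset.sum_comm]
  refine Finset.sum_congr rfl fun j _ => ?_
  rw [Matrix.det_apply']
  refine Finset.sum_congr rfl fun σ _ => ?_
  have hprod : ∏ i, ((Matrix.of fun i j' => a i j' x).updateCol j (fun i => D i j h)) (σ i) i
      = (D (σ j) j h) * ∏ i ∈ Finset.univ.erase j, a (σ i) i x := by
    rw [← Finset.mul_prod_erase Finset.univ _ (Finset.mem_univ j)]
    congr 1
    · simp [Matrix.updateCol_apply]
    · refine Finset.prod_congr rfl fun i hi => ?_
      rw [Matrix.updateCol_apply, if_neg (Finset.mem_erase.mp hi).1]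
      rfl
  rw [hprod]
  ring

lemma det_updateColumn_eq_zero {m : ℕ} (A : Matrix (Fin m) (Fin m) ℝ)
    (W : Submodule ℝ (Fin m → ℝ)) (hcol : ∀ j, (fun r => A r j) ∈ W)
    (hrk : Module.finrank ℝ W + 2 ≤ m) (j : Fin m) (w : Fin m → ℝ) :
    (A.updateCol j w).det = 0 := by
  classical
  rw [← Matrix.exists_mulVec_eq_zero_iff]
  have hcard : Fintype.card {i : Fin m // i ≠ j} = m - 1 := by
    simp [Fintype.card_subtype_compl]
  have hni : ¬ LinearIndependent ℝ
      (fun i : {i : Fin m // i ≠ j} => (⟨fun r => A r i.1, hcol i.1⟩ : W)) := by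
    intro hli
    have := hli.fintype_card_le_finrank
    rw [hcard] at this
    omega
  obtain ⟨g, hg, i₀, hi₀⟩ := Fintype.not_linearIndependent_iff.mp hni
  have hg' : ∑ i : {i : Fin m // i ≠ j}, g i • (fun r => A r i.1) = (0 : Fin m → ℝ) := by
    have := congrArg (W.subtype) hg
    simpa [map_sum] using this
  refine ⟨fun i => if h : i = j then 0 else g ⟨i, h⟩, ?_, ?_⟩
  · intro hv
    apply hi₀
    have := congrFun hv i₀.1
    simpa [dif_neg i₀.2] using this
  · funext r
    have key : ∑ i : Fin m, A r i * (if h : i = j then 0 else g ⟨i, h⟩) = 0 := by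
      rw [← Finset.sum_erase_add _ _ (Finset.mem_univ j)]
      rw [dif_pos rfl, mul_zero, add_zero]
      rw [Finset.sum_subtype (Finset.univ.erase j)
        (p := fun i => i ≠ j) (fun i => by simp) (fun i => A r i * (if h : i = j then 0 else g ⟨i, h⟩))]
      have := congrFun hg' r
      simp only [Finset.sum_apply, Pi.smul_apply, smul_eq_mul, Pi.zero_apply] at this
      rw [← this]
      refine Finset.sum_congr rfl fun i _ => ?_
      rw [dif_neg i.2]
      ring
    have key2 : ∑ i : Fin m, (A.updateCol j w) r i * (if h : i = j then 0 else g ⟨i, h⟩)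
        = ∑ i : Fin m, A r i * (if h : i = j then 0 else g ⟨i, h⟩) := by
      refine Finset.sum_congr rfl fun i _ => ?_
      by_cases h : i = j
      · simp [h]
      · rw [Matrix.updateCol_apply, if_neg h]
    show ∑ i : Fin m, (A.updateCol j w) r i * (if h : i = j then 0 else g ⟨i, h⟩) = 0
    rw [key2]
    exact key

/-- At a 1-nondegenerate singular point `p` of a front `f : U → ℝ^{n+1}`
(`λ(p) = 0`, `dλ_p ≠ 0`), the kernel of `df_p` has dimension exactly one. -/
theorem stmt_2 (n : ℕ) (U : Set (Fin n → ℝ)) (hU : IsOpen U)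
    (f : (Fin n → ℝ) → (Fin (n + 1) → ℝ)) (ν : (Fin n → ℝ) → (Fin (n + 1) → ℝ))
    (hf : ContDiffOn ℝ (⊤ : ℕ∞) f U) (hν : ContDiffOn ℝ (⊤ : ℕ∞) ν U)
    (hν0 : ∀ q ∈ U, ν q ≠ 0)
    (horth : ∀ q ∈ U, ∀ v : Fin n → ℝ, ∑ i, fderiv ℝ f q v i * ν q i = 0)
    (lam : (Fin n → ℝ) → ℝ)
    (hlam : ∀ q, lam q = Matrix.det (Matrix.of fun i j =>
      Fin.lastCases (ν q i) (fun j' : Fin n => fderiv ℝ f q (Pi.single j' 1) i) j))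
    (p : Fin n → ℝ) (hp : p ∈ U) (hsing : lam p = 0) (hnd : fderiv ℝ lam p ≠ 0) :
    Module.finrank ℝ
      (LinearMap.ker ((fderiv ℝ f p : (Fin n → ℝ) →L[ℝ] (Fin (n + 1) → ℝ))
        : (Fin n → ℝ) →ₗ[ℝ] (Fin (n + 1) → ℝ))) = 1 := by
  classical
  set a : Fin (n+1) → Fin (n+1) → (Fin n → ℝ) → ℝ :=
    fun i j q => Fin.lastCases (ν q i) (fun j' : Fin n => fderiv ℝ f q (Pi.single j' 1) i) j
    with ha
  have hlam' : lam = fun q => (Matrix.of fun i j => a i j q).det := funext hlam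
  set A : Matrix (Fin (n+1)) (Fin (n+1)) ℝ := Matrix.of fun i j => a i j p with hA
  have hAlast : ∀ r, A r (Fin.last n) = ν p r := fun r => by simp [hA, ha]
  have hAcast : ∀ (j' : Fin n) r, A r (Fin.castSucc j') = fderiv ℝ f p (Pi.single j' 1) r :=
    fun j' r => by simp [hA, ha]
  set dfl := ((fderiv ℝ f p : (Fin n → ℝ) →L[ℝ] (Fin (n + 1) → ℝ))
        : (Fin n → ℝ) →ₗ[ℝ] (Fin (n + 1) → ℝ)) with hdfl
  -- Lower bound: kernel is nontrivial
  have hdet0 : A.det = 0 := by rw [hlam'] at hsing; exact hsing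
  obtain ⟨v, hv0, hvA⟩ := (Matrix.exists_mulVec_eq_zero_iff).mpr hdet0
  have hνsq : 0 < ∑ r, ν p r * ν p r := by
    obtain ⟨r₀, hr₀⟩ : ∃ r, ν p r ≠ 0 := by
      by_contra hc
      push_neg at hc
      exact hν0 p hp (funext hc)
    exact Finset.sum_pos' (fun r _ => mul_self_nonneg _)
      ⟨r₀, Finset.mem_univ r₀, mul_self_pos.mpr hr₀⟩
  have hlast : v (Fin.last n) = 0 := by
    have h1 : ∑ r, (A *ᵥ v) r * ν p r = 0 := by rw [hvA]; simp
    have h2 : ∑ r, (A *ᵥ v) r * ν p r = v (Fin.last n) * ∑ r, ν p r * ν p r := by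
      have : ∀ r, (A *ᵥ v) r * ν p r = ∑ j, v j * (A r j * ν p r) := by
        intro r
        simp only [Matrix.mulVec, dotProduct, Finset.sum_mul]
        exact Finset.sum_congr rfl fun j _ => by ring
      simp only [this]
      rw [Finset.sum_comm]
      rw [Fin.sum_univ_castSucc]
      have hcast0 : ∀ j' : Fin n, ∑ r, v (Fin.castSucc j') * (A r (Fin.castSucc j') * ν p r) = 0 := by
        intro j'
        have := horth p hp (Pi.single j' 1)
        simp only [hAcast]
        rw [← Finset.mul_sum, this, mul_zero]
      rw [Finset.sum_congr rfl (fun j' _ => hcast0 j'), Finset.sum_const_zero, zero_add]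
      simp only [hAlast]
      rw [← Finset.mul_sum]
    rw [h1] at h2
    have := h2.symm
    rcases mul_eq_zero.mp this with h | h
    · exact h
    · exact absurd h (ne_of_gt hνsq)
  set u : Fin n → ℝ := fun j' => v (Fin.castSucc j') with hu
  have hu0 : u ≠ 0 := by
    intro hc
    apply hv0
    funext j
    induction j using Fin.lastCases with
    | last => exact hlast
    | cast j' => exact congrFun hc j'
  have hdfu : fderiv ℝ f p u = 0 := by
    have husum : u = ∑ j', u j' • (Pi.single j' 1 : Fin n → ℝ) := by
      funext i
      simp [Finset.sum_apply, Pi.single_apply]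
    rw [husum]
    rw [map_sum]
    funext r
    simp only [Finset.sum_apply, Pi.zero_apply, ContinuousLinearMap.map_smul, Pi.smul_apply,
      smul_eq_mul]
    have : ∀ j', u j' * (fderiv ℝ f p (Pi.single j' 1)) r = v (Fin.castSucc j') * A r (Fin.castSucc j') := by
      intro j'
      rw [hAcast]
    rw [Finset.sum_congr rfl fun j' _ => this j']
    have := congrFun hvA r
    simp only [Matrix.mulVec, dotProduct, Pi.zero_apply] at this
    rw [← this, Fin.sum_univ_castSucc]
    rw [hlast, mul_zero, add_zero]
    exact Finset.sum_congr rfl fun j' _ => by ring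
  have hker1 : 1 ≤ Module.finrank ℝ (LinearMap.ker dfl) := by
    rw [Nat.one_le_iff_ne_zero]
    intro hc
    have : LinearMap.ker dfl = ⊥ := Submodule.finrank_eq_zero.mp hc
    have hu_mem : u ∈ LinearMap.ker dfl := by
      rw [LinearMap.mem_ker]
      exact hdfu
    rw [this, Submodule.mem_bot] at hu_mem
    exact hu0 hu_mem
  -- Upper bound
  by_contra hne
  have hker2 : 2 ≤ Module.finrank ℝ (LinearMap.ker dfl) := by omega
  have hrn : Module.finrank ℝ (LinearMap.range dfl) + Module.finrank ℝ (LinearMap.ker dfl)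
      = n := by
    have := LinearMap.finrank_range_add_finrank_ker dfl
    rwa [Module.finrank_pi, Fintype.card_fin] at this
  set W : Submodule ℝ (Fin (n+1) → ℝ) := LinearMap.range dfl ⊔ (ℝ ∙ ν p) with hW
  have hWrk : Module.finrank ℝ W + 2 ≤ n + 1 := by
    have h1 : Module.finrank ℝ W ≤ Module.finrank ℝ (LinearMap.range dfl)
        + Module.finrank ℝ (ℝ ∙ ν p) :=
      Submodule.finrank_add_le_finrank_add_finrank _ _
    have h2 : Module.finrank ℝ (ℝ ∙ ν p) = 1 := finrank_span_singleton (hν0 p hp)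
    omega
  have hcolW : ∀ j, (fun r => A r j) ∈ W := by
    intro j
    induction j using Fin.lastCases with
    | last =>
      have : (fun r => A r (Fin.last n)) = ν p := funext hAlast
      rw [this]
      exact Submodule.mem_sup_right (Submodule.mem_span_singleton_self _)
    | cast j' =>
      have : (fun r => A r (Fin.castSucc j')) = dfl (Pi.single j' 1) := funext (hAcast j')
      rw [this]
      exact Submodule.mem_sup_left (LinearMap.mem_range_self _ _)
  -- differentiability of the entries
  have hDa : ∀ i j, DifferentiableAt ℝ (a i j) p := by
    intro i j
    induction j using Fin.lastCases with
    | last =>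
      have hν' : DifferentiableAt ℝ ν p :=
        (hν.contDiffAt (hU.mem_nhds hp)).differentiableAt (by simp)
      have hc : DifferentiableAt ℝ (fun q => ν q i) p := (differentiableAt_pi.mp hν') i
      exact hc.congr_of_eventuallyEq (by filter_upwards with q; simp [ha])
    | cast j' =>
      have hf' : ContDiffAt ℝ (⊤ : ℕ∞) (fderiv ℝ f) p :=
        (hf.contDiffAt (hU.mem_nhds hp)).fderiv_right (by simp)
      have hfd : DifferentiableAt ℝ (fderiv ℝ f) p := hf'.differentiableAt (by simp)
      have hL : DifferentiableAt ℝ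
          (fun (T : (Fin n → ℝ) →L[ℝ] (Fin (n+1) → ℝ)) => T (Pi.single j' 1) i)
          (fderiv ℝ f p) :=
        (((ContinuousLinearMap.proj i : (Fin (n+1) → ℝ) →L[ℝ] ℝ).comp
          (ContinuousLinearMap.apply ℝ (Fin (n+1) → ℝ)
            (Pi.single j' 1 : Fin n → ℝ))).differentiableAt)
      have hcomp : DifferentiableAt ℝ (fun q => fderiv ℝ f q (Pi.single j' 1) i) p :=
        hL.comp p hfd
      exact hcomp.congr_of_eventuallyEq (by filter_upwards with q; simp [ha])
  have hD : ∀ i j, HasFDerivAt (a i j) (fderiv ℝ (a i j) p) p :=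
    fun i j => (hDa i j).hasFDerivAt
  have hzero : fderiv ℝ lam p = 0 := by
    ext h
    rw [hlam']
    rw [fderiv_det_apply a (fun i j => fderiv ℝ (a i j) p) p hD h]
    rw [ContinuousLinearMap.zero_apply]
    refine Finset.sum_eq_zero fun j _ => ?_
    exact det_updateColumn_eq_zero A W hcolW hWrk j _
  exact hnd hzero
end

section
/- Let f : U → ℝⁿ⁺¹ be a front with normal ν and λ = det(f_{x_1}, ..., f_{x_n}, ν). Let η̃ be an extended null vector field (a smooth vector field with df_q(η̃_q) = 0 for all q in S_1 = {λ = 0}), and set f' := df(η̃). If (z_1, ..., z_n) is a coordinate system with ∂/∂z_n = η̃ and φ is the Jacobian determinant of the coordinate change, then λ' := dλ(η̃) satisfies, at every point q of S_1 where f'(q) = 0: λ'(q) = φ(q)·det(f_{z_1}, ..., f_{z_{n-1}}, f''(q), ν(q)), where f'' := df'(η̃). Consequently, for q ∈ S_1 with f'(q) = 0, f''(q) = 0 implies λ'(q) = 0. -/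
noncomputable def detCML (m : ℕ) : ContinuousMultilinearMap ℝ (fun _ : Fin m => (Fin m → ℝ)) ℝ :=
  { (Matrix.detRowAlternating : (Fin m → ℝ) [⋀^Fin m]→ₗ[ℝ] ℝ).toMultilinearMap with
    cont := by
      show Continuous fun M : Fin m → Fin m → ℝ => Matrix.det (Matrix.of M)
      simp only [Matrix.det_apply']
      refine continuous_finset_sum _ fun σ _ => Continuous.mul continuous_const ?_
      exact continuous_finset_prod _ fun i _ =>
        (continuous_apply _).comp (continuous_apply _) }

theorem detCML_apply (m : ℕ) (v : Fin m → (Fin m → ℝ)) :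
    detCML m v = Matrix.det (Matrix.of v) := rfl

theorem symm_castSucc (m : ℕ) (k : Fin (m+1)) :
    (finSumFinEquiv (m := m+1) (n := 1)).symm k.castSucc = Sum.inl k :=
  finSumFinEquiv_symm_apply_castAdd k

theorem symm_last (m : ℕ) :
    (finSumFinEquiv (m := m+1) (n := 1)).symm (Fin.last (m+1)) = Sum.inr 0 :=
  finSumFinEquiv_symm_last

theorem fderiv_apply_eq_sum (m k : ℕ) (f : (Fin m → ℝ) → (Fin k → ℝ)) (p : Fin m → ℝ)
    (v : Fin m → ℝ) :
    fderiv ℝ f p v = ∑ j, v j • fderiv ℝ f p (Pi.single j 1) := by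
  have hv : v = ∑ j, v j • (Pi.single j 1 : Fin m → ℝ) := by
    funext i
    simp [Finset.sum_apply, Pi.single_apply, Finset.sum_ite_eq, eq_comm]
  conv_lhs => rw [hv]
  rw [map_sum]
  simp [map_smul]

theorem key_det (m : ℕ) (f : (Fin (m+1) → ℝ) → (Fin (m+2) → ℝ))
    (w : (Fin (m+1) → ℝ) → (Fin (m+1) → ℝ)) (u : Fin (m+2) → ℝ) (y : Fin (m+1) → ℝ)
    (hf : DifferentiableAt ℝ f (w y)) (hw : DifferentiableAt ℝ w y) :
    Matrix.det (Matrix.of fun i j => Fin.lastCases (u i)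
        (fun j' : Fin (m+1) => fderiv ℝ (f ∘ w) y (Pi.single j' 1) i) j)
    = Matrix.det (Matrix.of fun i j => Fin.lastCases (u i)
        (fun k : Fin (m+1) => fderiv ℝ f (w y) (Pi.single k 1) i) j)
      * Matrix.det (Matrix.of fun k j' : Fin (m+1) => fderiv ℝ w y (Pi.single j' 1) k) := by
  set J : Matrix (Fin (m+1)) (Fin (m+1)) ℝ :=
    Matrix.of fun k j' => fderiv ℝ w y (Pi.single j' 1) k with hJ
  set A : Matrix (Fin (m+2)) (Fin (m+2)) ℝ :=
    Matrix.of fun i j => Fin.lastCases (u i)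
      (fun k : Fin (m+1) => fderiv ℝ f (w y) (Pi.single k 1) i) j with hA
  set B : Matrix (Fin (m+2)) (Fin (m+2)) ℝ :=
    (Matrix.fromBlocks J 0 0 (1 : Matrix (Fin 1) (Fin 1) ℝ)).submatrix
      (finSumFinEquiv (m := m+1) (n := 1)).symm
      (finSumFinEquiv (m := m+1) (n := 1)).symm with hB
  have hM : (Matrix.of fun i j => Fin.lastCases (u i)
        (fun j' : Fin (m+1) => fderiv ℝ (f ∘ w) y (Pi.single j' 1) i) j) = A * B := by
    ext i j
    rw [Matrix.mul_apply, Fin.sum_univ_castSucc]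
    induction j using Fin.lastCases with
    | last =>
      have h1 : ∀ k : Fin (m+1), B k.castSucc (Fin.last (m+1)) = 0 := by
        intro k; simp [hB, Matrix.submatrix_apply, symm_castSucc, symm_last]
      have h2 : B (Fin.last (m+1)) (Fin.last (m+1)) = 1 := by
        simp [hB, Matrix.submatrix_apply, symm_last]
      simp [h1, h2, hA]
    | cast j' =>
      have h1 : ∀ k : Fin (m+1), B k.castSucc j'.castSucc = J k j' := by
        intro k; simp [hB, Matrix.submatrix_apply, symm_castSucc]
      have h2 : B (Fin.last (m+1)) j'.castSucc = 0 := by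
        simp [hB, Matrix.submatrix_apply, symm_castSucc, symm_last]
      have hchain : fderiv ℝ (f ∘ w) y = (fderiv ℝ f (w y)).comp (fderiv ℝ w y) :=
        fderiv_comp y hf hw
      simp only [Matrix.of_apply, Fin.lastCases_castSucc, h1, h2, hA, mul_zero, add_zero,
        hchain, ContinuousLinearMap.comp_apply]
      rw [fderiv_apply_eq_sum]
      simp only [Finset.sum_apply, Pi.smul_apply, smul_eq_mul, hJ, Matrix.of_apply]
      exact Finset.sum_congr rfl fun k _ => mul_comm _ _
  rw [hM, Matrix.det_mul, hB, Matrix.det_submatrix_equiv_self,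
    Matrix.det_fromBlocks_zero₂₁, Matrix.det_one, mul_one, hJ]

/-- In a coordinate system `(z_1, …, z_n)` with `∂/∂z_n = η̃`
(parametrized by `w`, with Jacobian factor `φ = det(Dw)⁻¹ = det(∂z_i/∂x_j)`),
at a singular point `q ∈ S₁` with `f'(q) = 0` one has
`λ'(q) = φ(q) · det(f_{z_1}, …, f_{z_{n-1}}, f''(q), ν(q))`;
consequently `f''(q) = 0` implies `λ'(q) = 0`.
(Source dimension is `n + 1`, target dimension `n + 2`.) -/
theorem stmt_4 (n : ℕ) (U : Set (Fin (n + 1) → ℝ)) (hU : IsOpen U)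
    (f ν : (Fin (n + 1) → ℝ) → (Fin (n + 2) → ℝ))
    (hf : ContDiff ℝ (⊤ : ℕ∞) f) (hν : ContDiff ℝ (⊤ : ℕ∞) ν)
    (hν0 : ∀ q, ν q ≠ 0)
    (horth : ∀ q, ∀ v : Fin (n + 1) → ℝ, ∑ i, fderiv ℝ f q v i * ν q i = 0)
    (lam : (Fin (n + 1) → ℝ) → ℝ)
    (hlam : ∀ q, lam q = Matrix.det (Matrix.of fun i j =>
      Fin.lastCases (ν q i) (fun j' : Fin (n + 1) => fderiv ℝ f q (Pi.single j' 1) i) j))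
    -- extended null vector field
    (ηt : (Fin (n + 1) → ℝ) → (Fin (n + 1) → ℝ)) (hηt : ContDiff ℝ (⊤ : ℕ∞) ηt)
    (hηt0 : ∀ q, ηt q ≠ 0)
    (hnull : ∀ q ∈ U, lam q = 0 → fderiv ℝ f q (ηt q) = 0)
    -- the derivatives f' , f'' and λ' along η̃
    (f1 f2 : (Fin (n + 1) → ℝ) → (Fin (n + 2) → ℝ))
    (hf1 : ∀ q, f1 q = fderiv ℝ f q (ηt q))
    (hf2 : ∀ q, f2 q = fderiv ℝ f1 q (ηt q))
    (lam1 : (Fin (n + 1) → ℝ) → ℝ)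
    (hlam1 : ∀ q, lam1 q = fderiv ℝ lam q (ηt q))
    -- the coordinate system (z_1, …, z_n): w is the parametrization (inverse chart)
    (w : (Fin (n + 1) → ℝ) → (Fin (n + 1) → ℝ)) (hw : ContDiff ℝ (⊤ : ℕ∞) w)
    (hcoord : ∀ y, fderiv ℝ w y (Pi.single (Fin.last n) 1) = ηt (w y))
    (y0 q : Fin (n + 1) → ℝ) (hwq : w y0 = q) (hqU : q ∈ U)
    (Jw : Matrix (Fin (n + 1)) (Fin (n + 1)) ℝ)
    (hJw : Jw = Matrix.of fun i j => fderiv ℝ w y0 (Pi.single j 1) i)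
    (hJdet : Jw.det ≠ 0)
    (φ : ℝ) (hφ : φ = (Jw.det)⁻¹)
    (hsing : lam q = 0) (hf1q : f1 q = 0) :
    lam1 q = φ * Matrix.det (Matrix.of fun i j =>
      Fin.lastCases (ν q i)
        (fun j' : Fin (n + 1) =>
          if j' = Fin.last n then f2 q i else fderiv ℝ (f ∘ w) y0 (Pi.single j' 1) i) j) ∧
    (f2 q = 0 → lam1 q = 0) := by
  classical
  have hfd : Differentiable ℝ f := hf.differentiable (by simp)
  have hwd : Differentiable ℝ w := hw.differentiable (by simp)
  have hF : ContDiff ℝ (⊤ : ℕ∞) (f ∘ w) := hf.comp hw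
  set e : Fin (n+1) → ℝ := Pi.single (Fin.last n) 1 with he
  set col : (Fin (n+1) → ℝ) → Fin (n+2) → (Fin (n+2) → ℝ) :=
    fun y j => Fin.lastCases (ν (w y)) (fun j' => fderiv ℝ (f ∘ w) y (Pi.single j' 1)) j
    with hcol
  -- f1 is smooth
  have hf1c : ContDiff ℝ (⊤ : ℕ∞) f1 := by
    have h := (hf.fderiv_right (m := (⊤ : ℕ∞)) (by simp)).clm_apply hηt
    have hfe : f1 = fun p => fderiv ℝ f p (ηt p) := funext hf1
    rw [hfe]; exact h
  -- the last "coordinate column" is f1 ∘ w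
  have hcollast : (fun y => fderiv ℝ (f ∘ w) y (Pi.single (Fin.last n) 1)) = f1 ∘ w := by
    funext y
    rw [fderiv_comp y (hfd (w y)) (hwd y)]
    simp [ContinuousLinearMap.comp_apply, ← he, hcoord y, hf1]
  -- each column is smooth
  have hcomp : ∀ j : Fin (n+2), ContDiff ℝ (⊤ : ℕ∞) (fun y => col y j) := by
    intro j
    induction j using Fin.lastCases with
    | last => simpa [hcol, Function.comp_def] using hν.comp hw
    | cast j' =>
      simpa [hcol] using (hF.fderiv_right (m := (⊤ : ℕ∞)) (by simp)).clm_apply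
        (contDiff_const (c := Pi.single j' (1:ℝ)))
  have hcoldiff : DifferentiableAt ℝ col y0 :=
    differentiableAt_pi.2 fun j => ((hcomp j).differentiable (by simp)).differentiableAt
  set C := fderiv ℝ col y0 with hC
  have hcolHas : HasFDerivAt col C y0 := hcoldiff.hasFDerivAt
  -- the zero column at y0
  have hzero : col y0 (Fin.castSucc (Fin.last n)) = 0 := by
    simp only [hcol, Fin.lastCases_castSucc]
    rw [congrFun hcollast y0]
    simp [hwq, hf1q]
  -- derivative of the last coordinate column is f2 q
  have hCval : C e (Fin.castSucc (Fin.last n)) = f2 q := by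
    have hCpi : C = ContinuousLinearMap.pi fun j => fderiv ℝ (fun y => col y j) y0 := by
      rw [hC]; exact fderiv_pi fun j => ((hcomp j).differentiable (by simp)).differentiableAt
    rw [hCpi]
    show fderiv ℝ (fun y => col y (Fin.castSucc (Fin.last n))) y0 e = f2 q
    have : (fun y => col y (Fin.castSucc (Fin.last n))) = f1 ∘ w := by
      simp only [hcol, Fin.lastCases_castSucc]; exact hcollast
    rw [this, fderiv_comp y0 ((hf1c.differentiable (by simp) _)) (hwd y0)]
    simp only [ContinuousLinearMap.comp_apply, he]
    rw [hcoord y0, hwq, ← hf2]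
  -- λ is smooth
  have hlamc : ContDiff ℝ (⊤ : ℕ∞) lam := by
    have hrw : lam = fun p => detCML (n+2) (fun j => Fin.lastCases (ν p)
        (fun k : Fin (n+1) => fderiv ℝ f p (Pi.single k 1)) j) := by
      funext p
      rw [hlam p, detCML_apply, ← Matrix.det_transpose]
      congr 1
      ext j i
      induction j using Fin.lastCases <;> simp
    rw [hrw]
    refine (detCML (n+2)).contDiff.comp (contDiff_pi.2 fun j => ?_)
    induction j using Fin.lastCases with
    | last => simpa using hν
    | cast k => simpa using (hf.fderiv_right (m := (⊤ : ℕ∞)) (by simp)).clm_apply contDiff_const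
  -- the Jacobian determinant function
  set dJ : (Fin (n+1) → ℝ) → ℝ :=
    fun y => Matrix.det (Matrix.of fun k j' : Fin (n+1) => fderiv ℝ w y (Pi.single j' 1) k)
    with hdJdef
  have hdJ : ContDiff ℝ (⊤ : ℕ∞) dJ := by
    have hrw : dJ = fun y => detCML (n+1) (fun k j' => fderiv ℝ w y (Pi.single j' 1) k) := by
      funext y; rw [detCML_apply]
    rw [hrw]
    refine (detCML (n+1)).contDiff.comp (contDiff_pi.2 fun k => contDiff_pi.2 fun j' => ?_)
    exact contDiff_pi.1 ((hw.fderiv_right (m := (⊤ : ℕ∞)) (by simp)).clm_apply contDiff_const) k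
  -- the product identity
  have hμg : (fun y => detCML (n+2) (col y)) = fun y => lam (w y) * dJ y := by
    funext y
    rw [detCML_apply, ← Matrix.det_transpose]
    have htr : Matrix.transpose (Matrix.of (col y)) = Matrix.of fun i j => Fin.lastCases (ν (w y) i)
        (fun j' : Fin (n+1) => fderiv ℝ (f ∘ w) y (Pi.single j' 1) i) j := by
      ext i j
      simp only [Matrix.transpose_apply, Matrix.of_apply, hcol]
      induction j using Fin.lastCases <;> simp
    rw [htr, key_det n f w (ν (w y)) y (hfd (w y)) (hwd y), ← hlam (w y)]
  -- derivative of μ at y0 (chain rule through the multilinear det)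
  have hμHas : HasFDerivAt (fun y => detCML (n+2) (col y))
      (((detCML (n+2)).linearDeriv (col y0)).comp C) y0 :=
    ((detCML (n+2)).hasFDerivAt (col y0)).comp y0 hcolHas
  -- derivative of the product at y0
  have hg1 : HasFDerivAt (fun y => lam (w y))
      ((fderiv ℝ lam q).comp (fderiv ℝ w y0)) y0 := by
    have h := ((hlamc.differentiable (by simp) (w y0)).hasFDerivAt).comp y0 (hwd y0).hasFDerivAt
    rwa [hwq] at h
  have hg2 : HasFDerivAt dJ (fderiv ℝ dJ y0) y0 :=
    (hdJ.differentiable (by simp) y0).hasFDerivAt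
  have hgHas : HasFDerivAt (fun y => lam (w y) * dJ y)
      (lam (w y0) • fderiv ℝ dJ y0 + dJ y0 • (fderiv ℝ lam q).comp (fderiv ℝ w y0)) y0 :=
    hg1.mul hg2
  have hDeq : ((detCML (n+2)).linearDeriv (col y0)).comp C
      = lam (w y0) • fderiv ℝ dJ y0 + dJ y0 • (fderiv ℝ lam q).comp (fderiv ℝ w y0) := by
    apply hμHas.unique
    rw [hμg]; exact hgHas
  -- evaluate both sides at e
  have hLHS : (((detCML (n+2)).linearDeriv (col y0)).comp C) e
      = detCML (n+2) (Function.update (col y0) (Fin.castSucc (Fin.last n)) (f2 q)) := by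
    rw [ContinuousLinearMap.comp_apply, ContinuousMultilinearMap.linearDeriv_apply]
    rw [Finset.sum_eq_single (Fin.castSucc (Fin.last n))]
    · rw [hCval]
    · intro j _ hj
      apply (detCML (n+2)).map_coord_zero (i := Fin.castSucc (Fin.last n))
      rw [Function.update_of_ne (Ne.symm hj)]
      exact hzero
    · intro h; exact absurd (Finset.mem_univ _) h
  have hdJy0 : dJ y0 = Jw.det := by rw [hdJdef, hJw]
  have hRHS : (lam (w y0) • fderiv ℝ dJ y0
      + dJ y0 • (fderiv ℝ lam q).comp (fderiv ℝ w y0)) e = Jw.det * lam1 q := by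
    rw [ContinuousLinearMap.add_apply, ContinuousLinearMap.smul_apply,
      ContinuousLinearMap.smul_apply, ContinuousLinearMap.comp_apply]
    rw [hwq, hsing, he, hcoord y0, hwq, ← hlam1 q, hdJy0]
    simp [smul_eq_mul]
  -- identify the target determinant
  have hupdate : Function.update (col y0) (Fin.castSucc (Fin.last n)) (f2 q)
      = fun j => Fin.lastCases (ν q) (fun j' : Fin (n+1) =>
          if j' = Fin.last n then f2 q else fderiv ℝ (f ∘ w) y0 (Pi.single j' 1)) j := by
    funext j
    induction j using Fin.lastCases with
    | last =>
      rw [Function.update_of_ne (Fin.castSucc_lt_last _).ne']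
      simp [hcol, hwq]
    | cast j' =>
      by_cases hj' : j' = Fin.last n
      · subst hj'; rw [Function.update_self]; simp
      · rw [Function.update_of_ne (by simpa using (Fin.castSucc_injective _).ne hj')]
        simp [hcol, hj']
  have htarget : detCML (n+2) (Function.update (col y0) (Fin.castSucc (Fin.last n)) (f2 q))
      = Matrix.det (Matrix.of fun i j => Fin.lastCases (ν q i)
          (fun j' : Fin (n + 1) =>
            if j' = Fin.last n then f2 q i else fderiv ℝ (f ∘ w) y0 (Pi.single j' 1) i) j) := by
    rw [hupdate, detCML_apply, ← Matrix.det_transpose]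
    congr 1
    ext i j
    simp only [Matrix.transpose_apply, Matrix.of_apply]
    induction j using Fin.lastCases with
    | last => simp
    | cast j' =>
      by_cases hj' : j' = Fin.last n <;> simp [hj']
  have hkey : Matrix.det (Matrix.of fun i j => Fin.lastCases (ν q i)
        (fun j' : Fin (n + 1) =>
          if j' = Fin.last n then f2 q i else fderiv ℝ (f ∘ w) y0 (Pi.single j' 1) i) j)
      = Jw.det * lam1 q := by
    rw [← htarget, ← hLHS, hDeq, hRHS]
  refine ⟨?_, ?_⟩
  · rw [hφ, hkey, ← mul_assoc, inv_mul_cancel₀ hJdet, one_mul]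
  · intro h0
    have hT0 : Matrix.det (Matrix.of fun i j => Fin.lastCases (ν q i)
        (fun j' : Fin (n + 1) =>
          if j' = Fin.last n then f2 q i else fderiv ℝ (f ∘ w) y0 (Pi.single j' 1) i) j)
        = (0:ℝ) := by
      apply Matrix.det_eq_zero_of_column_eq_zero (Fin.castSucc (Fin.last n))
      intro i
      simp [h0]
    rw [hT0] at hkey
    rcases mul_eq_zero.1 hkey.symm with h | h
    · exact absurd h hJdet
    · exact h
end

section
/- Let f : U → Kⁿ⁺¹ be a front of the form f(z_1, ..., z_n) = (f¹(z), f²(z), z_1, ..., z_{n−1}) (the KRSUY normal form, property P5) with normal vector field ν = (ν¹, ..., νⁿ⁺¹), and suppose at p: df_p(∂/∂z_n) = 0, f_{z_j}(p) = e_{j+2} for j = 1, ..., n−1, and ν' ∉ span(ν) at p where ' = ∂/∂z_n (the front condition). Then the vectors f_{z_1}, ..., f_{z_{n−1}}, ν, ν' are linearly independent at p, and the planar vectors (ν¹, ν²) and ((ν¹)', (ν²)') are linearly independent in K² at p. -/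
open ContinuousLinearMap in
/-- Differentiating the orthogonality relation `⟨df(v), ν⟩ = 0` in direction `w`. -/
lemma stmt_10_key {K : Type*} [RCLike K] {m k : ℕ}
    (f ν : (Fin m → K) → (Fin k → K))
    (hf : ContDiff K (⊤ : ℕ∞) f) (hν : ContDiff K (⊤ : ℕ∞) ν)
    (horth : ∀ q, ∀ v : Fin m → K, ∑ i, fderiv K f q v i * ν q i = 0)
    (p v w : Fin m → K) :
    ∑ i, (fderiv K f p v i * fderiv K ν p w i
      + ν p i * fderiv K (fderiv K f) p w v i) = 0 := by
  have hdν : Differentiable K ν := hν.differentiable (by simp)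
  have hDf : Differentiable K (fderiv K f) :=
    (hf.fderiv_right (m := (⊤ : ℕ∞)) ((by simp))).differentiable (by simp)
  have hterm : ∀ i : Fin k, HasFDerivAt (fun q => fderiv K f q v i * ν q i)
      ((fderiv K f p v i) • ((ContinuousLinearMap.proj i :
          (Fin k → K) →L[K] K).comp (fderiv K ν p))
        + (ν p i) • (((ContinuousLinearMap.proj i :
            (Fin k → K) →L[K] K).comp
            (ContinuousLinearMap.apply K (Fin k → K) v)).comp
            (fderiv K (fderiv K f) p))) p := by
    intro i
    set L : ((Fin m → K) →L[K] (Fin k → K)) →L[K] K :=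
      (ContinuousLinearMap.proj i : (Fin k → K) →L[K] K).comp
        (ContinuousLinearMap.apply K (Fin k → K) v) with hL
    have hA : HasFDerivAt (fun q => fderiv K f q v i)
        (L.comp (fderiv K (fderiv K f) p)) p :=
      (L.hasFDerivAt (x := fderiv K f p)).comp p (hDf p).hasFDerivAt
    have hB : HasFDerivAt (fun q => ν q i)
        ((ContinuousLinearMap.proj i : (Fin k → K) →L[K] K).comp
          (fderiv K ν p)) p :=
      ((ContinuousLinearMap.proj i : (Fin k → K) →L[K] K).hasFDerivAt
        (x := ν p)).comp p (hdν p).hasFDerivAt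
    exact hA.mul hB
  have hsum := HasFDerivAt.fun_sum (fun i (_ : i ∈ Finset.univ) => hterm i)
  have hfun : (fun q => ∑ i, fderiv K f q v i * ν q i) = fun _ => (0 : K) :=
    funext fun q => horth q v
  have h0 : HasFDerivAt (fun q => ∑ i, fderiv K f q v i * ν q i)
      (0 : (Fin m → K) →L[K] K) p := hfun ▸ hasFDerivAt_const (0 : K) p
  have heq := hsum.unique h0
  have := DFunLike.congr_fun heq w
  simpa [Finset.sum_apply, mul_comm] using this

/-- Lemma 4.2: In KRSUY normal form, at a singular point `p` with
`f_{z_j}(p) = e_{j+2}`, `df_p(∂/∂z_n) = 0` and `ν'(p) ∉ span(ν(p))`, the vectors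
`f_{z_1}, …, f_{z_{n-1}}, ν, ν'` are linearly independent, and `(ν¹, ν²)`,
`((ν¹)', (ν²)')` are linearly independent in `K²`.
(Source dimension `n + 1`, target dimension `n + 2`.) -/
theorem stmt_10 {K : Type*} [RCLike K] (n : ℕ)
    (f ν : (Fin (n + 1) → K) → (Fin (n + 2) → K))
    (hf : ContDiff K (⊤ : ℕ∞) f) (hν : ContDiff K (⊤ : ℕ∞) ν)
    (hν0 : ∀ q, ν q ≠ 0)
    (horth : ∀ q, ∀ v : Fin (n + 1) → K, ∑ i, fderiv K f q v i * ν q i = 0)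
    -- KRSUY normal form: the last n+1 components of f are (z_1, …, z_n)
    (hnormal : ∀ q, ∀ j : Fin n, f q (j.succ.succ) = q j.castSucc)
    (p : Fin (n + 1) → K)
    (hnullp : fderiv K f p (Pi.single (Fin.last n) 1) = 0)
    (hframe : ∀ j : Fin n, fderiv K f p (Pi.single j.castSucc 1) =
      Pi.single (j.succ.succ : Fin (n + 2)) 1)
    (ν' : Fin (n + 2) → K) (hν' : ν' = fderiv K ν p (Pi.single (Fin.last n) 1))
    (hfront : ν' ∉ Submodule.span K {ν p}) :
    LinearIndependent K (fun j : Fin (n + 2) =>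
      (Fin.lastCases ν'
        (Fin.lastCases (ν p)
          (fun j' : Fin n => fderiv K f p (Pi.single j'.castSucc 1))) j
        : Fin (n + 2) → K)) ∧
    LinearIndependent K ![![ν p 0, ν p 1], ![ν' 0, ν' 1]] := by
  classical
  -- Step A: ν p vanishes on coordinates j+2
  have hνA : ∀ j : Fin n, ν p j.succ.succ = 0 := by
    intro j
    have h := horth p (Pi.single j.castSucc 1)
    rw [hframe j] at h
    simpa [Pi.single_apply] using h
  -- Step B: ν' vanishes on coordinates j+2
  have hsym := (hf.contDiffAt (x := p)).isSymmSndFDerivAt ((by rw [minSmoothness_of_isRCLikeNormedField]; exact WithTop.coe_le_coe.mpr (le_top : (2 : ℕ∞) ≤ ⊤)))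
  have hν'A : ∀ j : Fin n, ν' j.succ.succ = 0 := by
    intro j
    have h1 := stmt_10_key f ν hf hν horth p (Pi.single j.castSucc 1)
      (Pi.single (Fin.last n) 1)
    have h2 := stmt_10_key f ν hf hν horth p (Pi.single (Fin.last n) 1)
      (Pi.single j.castSucc 1)
    rw [hframe j, ← hν'] at h1
    rw [hnullp] at h2
    have hs := hsym (Pi.single (Fin.last n) 1) (Pi.single j.castSucc 1)
    rw [hs] at h1
    simp only [Pi.zero_apply, zero_mul, zero_add] at h2
    rw [Finset.sum_add_distrib, h2, add_zero] at h1
    simpa [Pi.single_apply] using h1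
  -- Pair independence
  have hpair : LinearIndependent K ![![ν p 0, ν p 1], ![ν' 0, ν' 1]] := by
    rw [LinearIndependent.pair_iff]
    intro s t hst
    have h0 : s * ν p 0 + t * ν' 0 = 0 := by
      have := congrFun hst 0; simpa using this
    have h1 : s * ν p 1 + t * ν' 1 = 0 := by
      have := congrFun hst 1; simpa using this
    have hall : ∀ i : Fin (n + 2), s * ν p i + t * ν' i = 0 := by
      intro i
      refine Fin.cases ?_ (fun i1 => ?_) i
      · exact h0
      · refine Fin.cases ?_ (fun j => ?_) i1
        · exact h1
        · rw [hνA j, hν'A j]; ring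
    have hvec : s • ν p + t • ν' = 0 := by
      funext i
      simpa using hall i
    have ht : t = 0 := by
      by_contra ht
      apply hfront
      have hv : ν' = (-(s/t)) • ν p := by
        funext i
        have h := hall i
        have : ν' i = (-(s/t)) * ν p i := by
          field_simp
          linear_combination h
        simpa using this
      rw [hv]
      exact Submodule.smul_mem _ _ (Submodule.mem_span_singleton_self _)
    have hs : s = 0 := by
      rw [ht, zero_smul, add_zero, smul_eq_zero] at hvec
      exact hvec.resolve_right (hν0 p)
    exact ⟨hs, ht⟩
  refine ⟨?_, hpair⟩
  -- Main independence
  rw [Fintype.linearIndependent_iff]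
  intro c hc
  rw [Fin.sum_univ_castSucc] at hc
  simp only [Fin.lastCases_last, Fin.lastCases_castSucc] at hc
  rw [Fin.sum_univ_castSucc] at hc
  simp only [Fin.lastCases_last, Fin.lastCases_castSucc, hframe] at hc
  set a := c ((Fin.last n).castSucc) with ha
  set b := c (Fin.last (n + 1)) with hb
  -- evaluate at coordinates 0 and 1
  have h0 : a * ν p 0 + b * ν' 0 = 0 := by
    have := congrFun hc 0
    simpa [Finset.sum_apply, Pi.single_apply, Fin.ext_iff, Fin.val_succ] using this
  have h1 : a * ν p 1 + b * ν' 1 = 0 := by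
    have := congrFun hc 1
    simpa [Finset.sum_apply, Pi.single_apply, Fin.ext_iff, Fin.val_succ] using this
  have hab := LinearIndependent.pair_iff.mp hpair a b (by
    funext i
    fin_cases i
    · simpa using h0
    · simpa using h1)
  -- coefficients of e_{j+2}
  have hcj : ∀ j : Fin n, c j.castSucc.castSucc = 0 := by
    intro j
    have := congrFun hc (j.succ.succ)
    simp only [Pi.add_apply, Pi.smul_apply, Finset.sum_apply, smul_eq_mul,
      hνA j, hν'A j, mul_zero, add_zero] at this
    rw [Finset.sum_eq_single j] at this
    · simpa using this
    · intro j' _ hj'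
      simp [Pi.single_apply, Fin.ext_iff, Fin.val_succ,
        fun h => hj' (Fin.ext h), Fin.val_ne_of_ne hj']
    · simp
  -- conclude
  intro i
  refine Fin.lastCases ?_ (fun i1 => ?_) i
  · exact hab.2
  · refine Fin.lastCases ?_ (fun j => ?_) i1
    · exact hab.1
    · exact hcj j
end

section
/- Let Φ : Kⁿ⁺¹ × K → K be defined by Φ(X, Y, t) := ⟨ν(Y, t), f(Y, t) − (X, Y)⟩, where f(Y, t) = (f¹(Y,t), f²(Y,t), Y) is a front in KRSUY normal form with normal ν, X ∈ K², Y ∈ Kⁿ⁻¹, and ⟨f_t, ν⟩ = 0. Suppose that for all (Y, t) near the base point, the 2×2 matrix with rows (ν¹, ν²) and (ν¹_t, ν²_t) is invertible. Then the discriminant set D_Φ := {(X,Y) : ∃t, Φ(X,Y,t) = 0 and Φ_t(X,Y,t) = 0} equals the image of f: (X, Y) ∈ D_Φ with witness t if and only if X = (f¹(Y,t), f²(Y,t)). -/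
/-- Proposition 4.1: For `Φ(X, Y, t) = ⟨ν(Y,t), f(Y,t) − (X,Y)⟩` with
`f` in KRSUY normal form `f(Y,t) = (f¹, f², Y)` and the `2×2` matrix of the first two
components of `ν, ν_t` invertible, a point `(X, Y)` lies in the discriminant set with
witness `t` iff `X = (f¹(Y,t), f²(Y,t))`; i.e. `D_Φ = Im f`.
(Source dimension `n + 1` with coordinates `(Y, t)`, target dimension `n + 2`.) -/
theorem stmt_15 {K : Type*} [RCLike K] (n : ℕ)
    (f ν : (Fin (n + 1) → K) → (Fin (n + 2) → K))
    (hf : ContDiff K (⊤ : ℕ∞) f) (hν : ContDiff K (⊤ : ℕ∞) ν)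
    (hν0 : ∀ q, ν q ≠ 0)
    (emb : (Fin n → K) → K → (Fin (n + 1) → K))
    (hemb : ∀ Y t, emb Y t = fun j => Fin.lastCases t (fun j' : Fin n => Y j') j)
    -- KRSUY normal form: the last n components of f are Y
    (hnormal : ∀ Y t, ∀ j : Fin n, f (emb Y t) (j.succ.succ) = Y j)
    -- the front orthogonality ⟨f_t, ν⟩ = 0
    (horth : ∀ q, ∑ i, fderiv K f q (Pi.single (Fin.last n) 1) i * ν q i = 0)
    -- invertibility of the 2×2 matrix of (ν¹, ν²) and ((ν¹)_t, (ν²)_t)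
    (hinv : ∀ Y t, Matrix.det
      !![ν (emb Y t) 0, ν (emb Y t) 1;
         fderiv K ν (emb Y t) (Pi.single (Fin.last n) 1) 0,
         fderiv K ν (emb Y t) (Pi.single (Fin.last n) 1) 1] ≠ 0)
    (XY : (Fin 2 → K) → (Fin n → K) → (Fin (n + 2) → K))
    (hXY : ∀ X Y, XY X Y = fun i =>
      Fin.cases (X 0) (fun i' : Fin (n + 1) => Fin.cases (X 1) (fun j : Fin n => Y j) i') i)
    (Φ : (Fin 2 → K) → (Fin n → K) → K → K)
    (hΦ : ∀ X Y t, Φ X Y t = ∑ i, ν (emb Y t) i * (f (emb Y t) i - XY X Y i)) :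
    ∀ (X : Fin 2 → K) (Y : Fin n → K) (t : K),
      (Φ X Y t = 0 ∧ deriv (Φ X Y) t = 0) ↔
      (X 0 = f (emb Y t) 0 ∧ X 1 = f (emb Y t) 1) := by
  intro X Y t
  set e : Fin (n + 1) → K := Pi.single (Fin.last n) 1 with he
  -- emb Y is affine in t
  have hemb_aff : emb Y = fun s =>
      (fun j => Fin.lastCases 0 (fun j' : Fin n => Y j') j) + s • e := by
    funext s
    rw [hemb]
    funext j
    refine Fin.lastCases ?_ (fun j' => ?_) j
    · simp [he]
    · have hne : (Fin.castSucc j') ≠ Fin.last n := (Fin.castSucc_lt_last j').ne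
      simp [he, Pi.single_eq_of_ne hne]
  have hde : ∀ s : K, HasDerivAt (emb Y) e s := by
    intro s
    rw [hemb_aff]
    simpa using ((hasDerivAt_id s).smul_const e).const_add
      (fun j => Fin.lastCases 0 (fun j' : Fin n => Y j') j)
  -- derivative of Φ X Y
  have key : ∀ s : K, HasDerivAt (Φ X Y)
      (∑ i, (fderiv K ν (emb Y s) e i * (f (emb Y s) i - XY X Y i)
          + ν (emb Y s) i * fderiv K f (emb Y s) e i)) s := by
    intro s
    have hΦfun : Φ X Y = fun s => ∑ i, ν (emb Y s) i * (f (emb Y s) i - XY X Y i) :=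
      funext (hΦ X Y)
    rw [hΦfun]
    apply HasDerivAt.fun_sum
    intro i _
    have hν1 : HasDerivAt (fun s => ν (emb Y s)) (fderiv K ν (emb Y s) e) s :=
      (((hν.differentiable (by simp)) (emb Y s)).hasFDerivAt).comp_hasDerivAt s (hde s)
    have hf1 : HasDerivAt (fun s => f (emb Y s)) (fderiv K f (emb Y s) e) s :=
      (((hf.differentiable (by simp)) (emb Y s)).hasFDerivAt).comp_hasDerivAt s (hde s)
    exact (hasDerivAt_pi.mp hν1 i).mul ((hasDerivAt_pi.mp hf1 i).sub_const (XY X Y i))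
  -- component facts
  have hXY0 : XY X Y 0 = X 0 := by rw [hXY]; simp
  have hXY1 : XY X Y 1 = X 1 := by
    rw [hXY, show (1 : Fin (n + 2)) = (0 : Fin (n + 1)).succ from (Fin.succ_zero_eq_one).symm]
    simp only [Fin.cases_succ, Fin.cases_zero]
  have hXYj : ∀ j : Fin n, XY X Y (j.succ.succ) = Y j := by
    intro j; rw [hXY]; simp
  have hA : ∀ j : Fin n, f (emb Y t) j.succ.succ - XY X Y j.succ.succ = 0 := by
    intro j; rw [hnormal, hXYj]; ring
  have hsplit : ∀ c : Fin (n + 2) → K,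
      ∑ i, c i * (f (emb Y t) i - XY X Y i)
        = c 0 * (f (emb Y t) 0 - X 0) + c 1 * (f (emb Y t) 1 - X 1) := by
    intro c
    rw [Fin.sum_univ_succ, Fin.sum_univ_succ]
    have hz : ∀ j : Fin n,
        c j.succ.succ * (f (emb Y t) j.succ.succ - XY X Y j.succ.succ) = 0 := by
      intro j; rw [hA j, mul_zero]
    rw [Finset.sum_congr rfl (fun j _ => hz j), Finset.sum_const_zero, add_zero]
    simp only [Fin.succ_zero_eq_one]
    rw [hXY0, hXY1]
  set a := f (emb Y t) 0 - X 0 with ha_def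
  set b := f (emb Y t) 1 - X 1 with hb_def
  set p0 := ν (emb Y t) 0 with hp0
  set p1 := ν (emb Y t) 1 with hp1
  set d0 := fderiv K ν (emb Y t) e 0 with hd0
  set d1 := fderiv K ν (emb Y t) e 1 with hd1
  have hΦval : Φ X Y t = p0 * a + p1 * b := by
    rw [hΦ, hsplit]
  have horthval : ∑ i, ν (emb Y t) i * fderiv K f (emb Y t) e i = 0 := by
    rw [← horth (emb Y t)]
    exact Finset.sum_congr rfl (fun i _ => mul_comm _ _)
  have hdval : deriv (Φ X Y) t = d0 * a + d1 * b := by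
    rw [(key t).deriv, Finset.sum_add_distrib, horthval, add_zero,
      hsplit (fun i => fderiv K ν (emb Y t) e i)]
  have hdet : p0 * d1 - p1 * d0 ≠ 0 := by
    have := hinv Y t
    rwa [Matrix.det_fin_two_of] at this
  constructor
  · rintro ⟨h1, h2⟩
    rw [hΦval] at h1
    rw [hdval] at h2
    have ha : a * (p0 * d1 - p1 * d0) = 0 := by linear_combination d1 * h1 - p1 * h2
    have hb : b * (p0 * d1 - p1 * d0) = 0 := by linear_combination p0 * h2 - d0 * h1
    have ha0 : a = 0 := (mul_eq_zero.mp ha).resolve_right hdet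
    have hb0 : b = 0 := (mul_eq_zero.mp hb).resolve_right hdet
    exact ⟨(sub_eq_zero.mp ha0).symm, (sub_eq_zero.mp hb0).symm⟩
  · rintro ⟨h1, h2⟩
    have ha0 : a = 0 := by rw [ha_def, h1, sub_self]
    have hb0 : b = 0 := by rw [hb_def, h2, sub_self]
    constructor
    · rw [hΦval, ha0, hb0]; ring
    · rw [hdval, ha0, hb0]; ring
end
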